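/- Let I be the class of well-tempered scoring games G with gap_0(G) = 0. If G, H ∈ I then G - G ≈ 0, and the following are equivalent: (a) G ≳ H; (b) R(G - H) ≥ 0 and π(G) = π(H); (c) L(H - G) ≤ 0 and π(G) = π(H). -/

import Mathlib

/-- Well-tempered scoring game trees: an integer (final score) or a position
with lists of Left and Right options. -/
inductive WT : Type where
  | int : ℤ → WT
  | node : List WT → List WT → WT

namespace WT

/-- Left options. -/
def lopts : WT → List WT
  | int _ => []
  | node L _ => L

/-- Right options. -/
def ropts : WT → List WT
  | int _ => []
  | node _ R => R

theorem sizeOf_lt_of_mem_lopts : ∀ {G g : WT}, g ∈ G.lopts → sizeOf g < sizeOf G := by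
  intro G g h
  cases G with
  | int n => simp [lopts] at h
  | node L R =>
    simp only [lopts] at h
    have h1 := List.sizeOf_lt_of_mem h
    have h2 : sizeOf (WT.node L R) = 1 + sizeOf L + sizeOf R := by simp
    omega

theorem sizeOf_lt_of_mem_ropts : ∀ {G g : WT}, g ∈ G.ropts → sizeOf g < sizeOf G := by
  intro G g h
  cases G with
  | int n => simp [ropts] at h
  | node L R =>
    simp only [ropts] at h
    have h1 := List.sizeOf_lt_of_mem h
    have h2 : sizeOf (WT.node L R) = 1 + sizeOf L + sizeOf R := by simp
    omega

/-- Disjunctive sum of two games. -/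
def add (G H : WT) : WT :=
  match G, H with
  | int m, int n => int (m + n)
  | G, H =>
    node ((G.lopts.attach.map fun g => add g.1 H) ++ (H.lopts.attach.map fun h => add G h.1))
         ((G.ropts.attach.map fun g => add g.1 H) ++ (H.ropts.attach.map fun h => add G h.1))
termination_by sizeOf G + sizeOf H
decreasing_by
  all_goals
    first
      | (have := sizeOf_lt_of_mem_lopts g.2; omega)
      | (have := sizeOf_lt_of_mem_lopts h.2; omega)
      | (have := sizeOf_lt_of_mem_ropts g.2; omega)
      | (have := sizeOf_lt_of_mem_ropts h.2; omega)

/-- Negation of a game: swap players and negate scores. -/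
def neg : WT → WT
  | int n => int (-n)
  | node L R =>
    node ((WT.node L R).ropts.attach.map fun g => neg g.1)
         ((WT.node L R).lopts.attach.map fun g => neg g.1)
termination_by G => sizeOf G
decreasing_by
  all_goals
    first
      | exact sizeOf_lt_of_mem_lopts g.2
      | exact sizeOf_lt_of_mem_ropts g.2

def lmax : List ℤ → ℤ
  | [] => 0
  | x :: xs => xs.foldl max x

def lmin : List ℤ → ℤ
  | [] => 0
  | x :: xs => xs.foldl min x

/-- The pair (left outcome, right outcome). -/
def out : WT → ℤ × ℤ
  | int n => (n, n)
  | node L R =>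
    (lmax ((WT.node L R).lopts.attach.map fun g => (out g.1).2),
     lmin ((WT.node L R).ropts.attach.map fun g => (out g.1).1))
termination_by G => sizeOf G
decreasing_by
  all_goals
    first
      | exact sizeOf_lt_of_mem_lopts g.2
      | exact sizeOf_lt_of_mem_ropts g.2

/-- Left outcome L(G): optimal score when Left moves first. -/
def Lout (G : WT) : ℤ := G.out.1

/-- Right outcome R(G): optimal score when Right moves first. -/
def Rout (G : WT) : ℤ := G.out.2

/-- `IsWT G p` : `G` is a well-tempered game of parity `p`
(`false` = even-tempered, `true` = odd-tempered). -/
inductive IsWT : WT → Bool → Prop where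
  | int (n : ℤ) : IsWT (WT.int n) false
  | node {L R : List WT} {p : Bool} (hL : L ≠ []) (hR : R ≠ [])
      (hLp : ∀ g ∈ L, IsWT g p) (hRp : ∀ g ∈ R, IsWT g p) :
      IsWT (WT.node L R) (!p)

/-- `G` is a well-tempered game (of some parity). -/
def Wt (G : WT) : Prop := ∃ p, IsWT G p

/-- Parity, computed structurally (`false` = even-tempered, `true` = odd-tempered;
agrees with `IsWT` on well-tempered games). -/
def par : WT → Bool
  | int _ => false
  | node [] _ => true
  | node (g :: _) _ => !(par g)

/-- Final score under optimal play when Left moves last. -/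
def Lf (G : WT) : ℤ := if G.par then G.Lout else G.Rout

/-- Final score under optimal play when Right moves last. -/
def Rf (G : WT) : ℤ := if G.par then G.Rout else G.Lout

/-- `G ≲ H` : for every well-tempered `X`, `L(G+X) ≤ L(H+X)` and `R(G+X) ≤ R(H+X)`. -/
def Le (G H : WT) : Prop :=
  ∀ X : WT, X.Wt → (G.add X).Lout ≤ (H.add X).Lout ∧ (G.add X).Rout ≤ (H.add X).Rout

/-- `G ≳ H`. -/
def Ge (G H : WT) : Prop := Le H G

/-- `G ≈ H` : equivalence of scoring games. -/
def Equiv (G H : WT) : Prop :=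
  ∀ X : WT, X.Wt → (G.add X).Lout = (H.add X).Lout ∧ (G.add X).Rout = (H.add X).Rout

/-- `G` and `H` are well-tempered with the same parity. -/
def SamePar (G H : WT) : Prop := ∃ p, IsWT G p ∧ IsWT H p

/-- `G` takes values in `S`: every integer subgame lies in `S`. -/
inductive Valued (S : Set ℤ) : WT → Prop where
  | int {n : ℤ} : n ∈ S → Valued S (WT.int n)
  | node {L R : List WT} : (∀ g ∈ L, Valued S g) → (∀ g ∈ R, Valued S g) →
      Valued S (WT.node L R)

/-- `Subgame H G` : `H` is a subgame of `G`. -/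
inductive Subgame : WT → WT → Prop where
  | refl (G : WT) : Subgame G G
  | left {H G' : WT} {L R : List WT} : G' ∈ L → Subgame H G' → Subgame H (WT.node L R)
  | right {H G' : WT} {L R : List WT} : G' ∈ R → Subgame H G' → Subgame H (WT.node L R)

/-- `gap G p` : supremum of `R(H) - L(H)` over subgames `H` of `G` of parity `p`
(as an element of `WithBot ℤ`; the supremum of the empty set is `⊥ = -∞`). -/
noncomputable def gap (G : WT) (p : Bool) : WithBot ℤ :=
  sSup {x : WithBot ℤ | ∃ H : WT, Subgame H G ∧ IsWT H p ∧ x = ((H.Rout - H.Lout : ℤ) : WithBot ℤ)}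

/-- Heating by `t`. -/
def heat (t : ℤ) : WT → WT
  | int n => int n
  | node L R =>
    node ((WT.node L R).lopts.attach.map fun g => (WT.int t).add (heat t g.1))
         ((WT.node L R).ropts.attach.map fun g => (WT.int (-t)).add (heat t g.1))
termination_by G => sizeOf G
decreasing_by
  all_goals
    first
      | exact sizeOf_lt_of_mem_lopts g.2
      | exact sizeOf_lt_of_mem_ropts g.2

/-!
Call `K` gap-nonpositive if every even-tempered subgame `K'` has `R(K') ≤ L(K')`, i.e.
`gap₀(K) ≤ 0`; the class is closed under subgames, negation and sums. Adding such a `K`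
moves outcomes within explicit bounds: for even-tempered `K`,
`R(K) + L(X) ≤ L(K + X) ≤ L(K) + L(X)` and the same with `R(X)`, `R(K + X)`; for
odd-tempered `K`, `L(K) + R(X) ≤ L(K + X)` and `R(K + X) ≤ R(K) + L(X)`. The lower bounds are
proved by a simultaneous induction on `K` and `X` in which Left answers in the component Right
has just played in; the upper bounds follow by negation.

The mirror strategy gives `L(G - G) ≤ 0 ≤ R(G - G)`, so the bounds squeeze the outcomes of
`(G - G) + X` to those of `X`, which is `G - G ≈ 0`. If `π(G) = π(H)` and `R(G - H) ≥ 0`,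
the bounds give `H + X ≲ (G - H) + (H + X)`, and the right side has the outcomes of
`(H - H) + (G + X)`, that is of `G + X`. Conversely, testing `G ≳ H` against `X = -H`
gives `R(G - H) ≥ R(H - H) ≥ 0`, and testing it against the switches `{-n | n}` rules out
different parities. Finally `R(G - H) = -L(H - G)` by negation.
-/

/-! ### Maxima and minima of integer lists -/

section Extrema

variable {l l₁ l₂ : List ℤ} {a m : ℤ}

theorem lmax_eq_max (hl : l ≠ []) : lmax l = l.max hl := by
  cases l with
  | nil => exact absurd rfl hl
  | cons x xs => rfl

theorem lmin_eq_min (hl : l ≠ []) : lmin l = l.min hl := by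
  cases l with
  | nil => exact absurd rfl hl
  | cons x xs => rfl

theorem le_lmax_of_mem (ha : a ∈ l) : a ≤ lmax l := by
  rw [lmax_eq_max (List.ne_nil_of_mem ha)]
  exact List.le_max_of_mem ha

theorem lmin_le_of_mem (ha : a ∈ l) : lmin l ≤ a := by
  rw [lmin_eq_min (List.ne_nil_of_mem ha)]
  exact List.min_le_of_mem ha

theorem le_lmax_iff (hl : l ≠ []) : m ≤ lmax l ↔ ∃ a ∈ l, m ≤ a := by
  refine ⟨fun h => ⟨lmax l, ?_, h⟩, fun ⟨a, ha, h⟩ => h.trans (le_lmax_of_mem ha)⟩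
  rw [lmax_eq_max hl]
  exact List.max_mem hl

theorem lmax_le_iff (hl : l ≠ []) : lmax l ≤ m ↔ ∀ a ∈ l, a ≤ m := by
  rw [lmax_eq_max hl]
  exact List.max_le_iff hl

theorem lmin_le_iff (hl : l ≠ []) : lmin l ≤ m ↔ ∃ a ∈ l, a ≤ m := by
  refine ⟨fun h => ⟨lmin l, ?_, h⟩, fun ⟨a, ha, h⟩ => (lmin_le_of_mem ha).trans h⟩
  rw [lmin_eq_min hl]
  exact List.min_mem hl

theorem le_lmin_iff (hl : l ≠ []) : m ≤ lmin l ↔ ∀ a ∈ l, m ≤ a := by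
  rw [lmin_eq_min hl]
  exact List.le_min_iff hl

theorem lmax_congr (h₁ : l₁ ⊆ l₂) (h₂ : l₂ ⊆ l₁) : lmax l₁ = lmax l₂ := by
  rcases eq_or_ne l₁ [] with rfl | hl₁
  · rw [List.subset_nil.1 h₂]
  have hl₂ : l₂ ≠ [] := fun h => hl₁ (List.subset_nil.1 (h ▸ h₁))
  exact le_antisymm ((lmax_le_iff hl₁).2 fun a ha => le_lmax_of_mem (h₁ ha))
    ((lmax_le_iff hl₂).2 fun a ha => le_lmax_of_mem (h₂ ha))

theorem lmin_congr (h₁ : l₁ ⊆ l₂) (h₂ : l₂ ⊆ l₁) : lmin l₁ = lmin l₂ := by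
  rcases eq_or_ne l₁ [] with rfl | hl₁
  · rw [List.subset_nil.1 h₂]
  have hl₂ : l₂ ≠ [] := fun h => hl₁ (List.subset_nil.1 (h ▸ h₁))
  exact le_antisymm ((le_lmin_iff hl₂).2 fun a ha => lmin_le_of_mem (h₂ ha))
    ((le_lmin_iff hl₁).2 fun a ha => lmin_le_of_mem (h₁ ha))

theorem lmax_map_neg (l : List ℤ) : lmax (l.map (-·)) = -lmin l := by
  rcases eq_or_ne l [] with rfl | hl
  · rfl
  have hl' : l.map (-·) ≠ [] := by simpa using hl
  obtain ⟨b, hb, hbl⟩ := (lmin_le_iff hl).1 le_rfl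
  exact le_antisymm
    ((lmax_le_iff hl').2 (List.forall_mem_map.2 fun a ha => neg_le_neg (lmin_le_of_mem ha)))
    ((le_lmax_iff hl').2 ⟨-b, List.mem_map_of_mem hb, by omega⟩)

theorem lmin_map_neg (l : List ℤ) : lmin (l.map (-·)) = -lmax l := by
  have := lmax_map_neg (l.map (-·))
  simp only [List.map_map, Function.comp_def, _root_.neg_neg, List.map_id'] at this
  omega

theorem lmax_map_add_const (hl : l ≠ []) (c : ℤ) : lmax (l.map (· + c)) = lmax l + c := by
  have hl' : l.map (· + c) ≠ [] := by simpa using hl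
  obtain ⟨b, hb, hbl⟩ := (le_lmax_iff hl).1 le_rfl
  exact le_antisymm
    ((lmax_le_iff hl').2 (List.forall_mem_map.2 fun a ha => by linarith [le_lmax_of_mem ha]))
    ((le_lmax_iff hl').2 ⟨b + c, List.mem_map_of_mem hb, by omega⟩)

theorem lmin_map_add_const (hl : l ≠ []) (c : ℤ) : lmin (l.map (· + c)) = lmin l + c := by
  have hl' : l.map (· + c) ≠ [] := by simpa using hl
  obtain ⟨b, hb, hbl⟩ := (lmin_le_iff hl).1 le_rfl
  exact le_antisymm ((lmin_le_iff hl').2 ⟨b + c, List.mem_map_of_mem hb, by omega⟩)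
    ((le_lmin_iff hl').2 (List.forall_mem_map.2 fun a ha => by linarith [lmin_le_of_mem ha]))

end Extrema

/-! ### Outcomes and negation -/

theorem opts_induction₂ {P : WT → WT → Prop}
    (ind : ∀ G H, (∀ g ∈ G.lopts ++ G.ropts, P g H) →
      (∀ h ∈ H.lopts ++ H.ropts, P G h) → P G H)
    (G H : WT) : P G H :=
  ind G H (fun g _ => opts_induction₂ ind g H) (fun h _ => opts_induction₂ ind G h)
termination_by sizeOf G + sizeOf H
decreasing_by
  all_goals
    rcases List.mem_append.1 ‹_› with h | h
    · have := sizeOf_lt_of_mem_lopts h; omega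
    · have := sizeOf_lt_of_mem_ropts h; omega

theorem opts_induction {P : WT → Prop} (ind : ∀ G, (∀ g ∈ G.lopts ++ G.ropts, P g) → P G)
    (G : WT) : P G :=
  opts_induction₂ (P := fun G _ => P G) (fun G _ ih _ => ind G ih) G G

theorem out_int (n : ℤ) : (int n).out = (n, n) := by simp [out]

theorem out_node (L R : List WT) : (node L R).out = (lmax (L.map Rout), lmin (R.map Lout)) := by
  rw [out]; simp only [lopts, ropts, List.map_attach_eq_pmap, List.pmap_eq_map]; rfl

theorem Lout_int (n : ℤ) : (int n).Lout = n := by simp [Lout, out_int]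

theorem Rout_int (n : ℤ) : (int n).Rout = n := by simp [Rout, out_int]

theorem Lout_node (L R : List WT) : (node L R).Lout = lmax (L.map Rout) := by simp [Lout, out_node]

theorem Rout_node (L R : List WT) : (node L R).Rout = lmin (R.map Lout) := by simp [Rout, out_node]

theorem Rout_le_Lout_of_mem_lopts {W g : WT} (hg : g ∈ W.lopts) : g.Rout ≤ W.Lout := by
  cases W with
  | int n => simp [lopts] at hg
  | node L R => exact Lout_node L R ▸ le_lmax_of_mem (List.mem_map_of_mem hg)

theorem Rout_le_Lout_of_mem_ropts {W g : WT} (hg : g ∈ W.ropts) : W.Rout ≤ g.Lout := by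
  cases W with
  | int n => simp [ropts] at hg
  | node L R => exact Rout_node L R ▸ lmin_le_of_mem (List.mem_map_of_mem hg)

theorem le_Lout_iff {W : WT} (hW : W.lopts ≠ []) {m : ℤ} :
    m ≤ W.Lout ↔ ∃ g ∈ W.lopts, m ≤ g.Rout := by
  cases W with
  | int n => simp [lopts] at hW
  | node L R => simp [Lout_node, le_lmax_iff (l := L.map Rout) (by simpa [lopts] using hW), lopts]

theorem le_Rout_iff {W : WT} (hW : W.ropts ≠ []) {m : ℤ} :
    m ≤ W.Rout ↔ ∀ g ∈ W.ropts, m ≤ g.Lout := by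
  cases W with
  | int n => simp [ropts] at hW
  | node L R => simp [Rout_node, le_lmin_iff (l := R.map Lout) (by simpa [ropts] using hW), ropts]

theorem neg_int (n : ℤ) : (int n).neg = int (-n) := by simp [neg]

theorem neg_node (L R : List WT) : (node L R).neg = node (R.map neg) (L.map neg) := by
  rw [neg]; simp [lopts, ropts]

theorem lopts_neg (G : WT) : G.neg.lopts = G.ropts.map neg := by
  cases G <;> simp [neg_int, neg_node, lopts, ropts]

theorem ropts_neg (G : WT) : G.neg.ropts = G.lopts.map neg := by
  cases G <;> simp [neg_int, neg_node, lopts, ropts]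

protected theorem neg_neg : ∀ G : WT, G.neg.neg = G
  | int n => by simp [neg_int]
  | node L R => by
    simp only [neg_node, List.map_map, node.injEq]
    exact ⟨(List.map_congr_left fun g _ => WT.neg_neg g).trans (List.map_id L),
      (List.map_congr_left fun g _ => WT.neg_neg g).trans (List.map_id R)⟩

theorem out_neg : ∀ G : WT, G.neg.out = (-G.Rout, -G.Lout)
  | int n => by simp [neg_int, out_int, Lout_int, Rout_int]
  | node L R => by
    have hR : (R.map neg).map Rout = (R.map Lout).map (-·) := by
      simp only [List.map_map]
      exact List.map_congr_left fun g _ => by simp [Rout, out_neg g]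
    have hL : (L.map neg).map Lout = (L.map Rout).map (-·) := by
      simp only [List.map_map]
      exact List.map_congr_left fun g _ => by simp [Lout, out_neg g]
    rw [neg_node, out_node, hR, hL, lmax_map_neg, lmin_map_neg, Lout_node, Rout_node]

theorem Lout_neg (G : WT) : G.neg.Lout = -G.Rout := by simp [Lout, out_neg]

theorem Rout_neg (G : WT) : G.neg.Rout = -G.Lout := by simp [Rout, out_neg]

/-! ### Disjunctive sums -/

theorem add_int_int (m n : ℤ) : (int m).add (int n) = int (m + n) := by simp [add]

theorem int_add_node (m : ℤ) (L R : List WT) :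
    (int m).add (node L R) = node (L.map (int m).add) (R.map (int m).add) := by
  rw [add] <;> simp [lopts, ropts]

theorem node_add (L R : List WT) (H : WT) :
    (node L R).add H = node (L.map (·.add H) ++ H.lopts.map (node L R).add)
      (R.map (·.add H) ++ H.ropts.map (node L R).add) := by
  rw [add] <;> simp [lopts, ropts]

theorem lopts_add (G H : WT) : (G.add H).lopts = G.lopts.map (·.add H) ++ H.lopts.map G.add := by
  cases G <;> cases H <;> simp [add_int_int, int_add_node, node_add, lopts]

theorem ropts_add (G H : WT) : (G.add H).ropts = G.ropts.map (·.add H) ++ H.ropts.map G.add := by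
  cases G <;> cases H <;> simp [add_int_int, int_add_node, node_add, ropts]

theorem add_eq_int_iff {G H : WT} {n : ℤ} :
    G.add H = int n ↔ ∃ a b, G = int a ∧ H = int b ∧ a + b = n := by
  cases G <;> cases H <;> simp [add_int_int, int_add_node, node_add]

protected theorem add_zero : ∀ G : WT, G.add (int 0) = G
  | int n => by simp [add_int_int]
  | node L R => by
    simp only [node_add, lopts, ropts, List.map_nil, List.append_nil, node.injEq]
    exact ⟨(List.map_congr_left fun g _ => WT.add_zero g).trans (List.map_id L),
      (List.map_congr_left fun g _ => WT.add_zero g).trans (List.map_id R)⟩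

protected theorem neg_add (G H : WT) : (G.add H).neg = G.neg.add H.neg := by
  induction G, H using opts_induction₂ with
  | ind G H ihG ihH =>
  cases G with
  | int m =>
    cases H with
    | int n => rw [add_int_int, neg_int, neg_int, neg_int, add_int_int, neg_add]
    | node L R =>
      simp only [int_add_node, neg_node, neg_int, List.map_map, node.injEq]
      constructor <;> exact List.map_congr_left fun h hh => by
        simpa [neg_int] using ihH h (by simp [lopts, ropts, hh])
  | node L R =>
    have e := neg_node L R
    rw [node_add, neg_node, e, node_add, lopts_neg, ropts_neg, ← e]
    simp only [List.map_append, List.map_map, node.injEq]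
    constructor <;> congr 1 <;> refine List.map_congr_left fun g hg => ?_
    · exact ihG g (by simp [lopts, ropts, hg])
    · exact ihH g (by simp [hg])
    · exact ihG g (by simp [lopts, ropts, hg])
    · exact ihH g (by simp [hg])

-- `add` is commutative only up to the order of options, so rearranged sums are compared
-- through a bisimulation rather than an equation.
theorem out_eq_of_bisimulation {r : WT → WT → Prop} (symm : ∀ ⦃G H⦄, r G H → r H G)
    (eq_int : ∀ ⦃G H⦄, r G H → ∀ n, G = int n → H = int n)
    (lopts_rel : ∀ ⦃G H⦄, r G H → ∀ g ∈ G.lopts, ∃ h ∈ H.lopts, r g h)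
    (ropts_rel : ∀ ⦃G H⦄, r G H → ∀ g ∈ G.ropts, ∃ h ∈ H.ropts, r g h)
    {G H : WT} (hGH : r G H) : G.out = H.out := by
  induction G using opts_induction generalizing H with
  | ind G ih =>
  have sub : ∀ {A B : List WT} (f : WT → ℤ),
      (∀ g ∈ A, ∃ h ∈ B, f g = f h) → A.map f ⊆ B.map f :=
    fun f hAB _ ha => by
      obtain ⟨g, hg, rfl⟩ := List.mem_map.1 ha
      obtain ⟨h, hh, e⟩ := hAB g hg
      exact List.mem_map.2 ⟨h, hh, e.symm⟩
  match G, H with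
  | int n, H => rw [eq_int hGH n rfl]
  | node L R, int n => exact nomatch eq_int (symm hGH) n rfl
  | node L R, node L' R' =>
    rw [out_node, out_node, Prod.mk.injEq]
    constructor
    · refine lmax_congr (sub _ fun g hg => ?_) (sub _ fun h hh => ?_)
      · obtain ⟨h, hh, hgh⟩ := lopts_rel hGH g hg
        exact ⟨h, hh, congrArg Prod.snd (ih g (List.mem_append_left _ hg) hgh)⟩
      · obtain ⟨g, hg, hhg⟩ := lopts_rel (symm hGH) h hh
        exact ⟨g, hg, congrArg Prod.snd (ih g (List.mem_append_left _ hg) (symm hhg)).symm⟩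
    · refine lmin_congr (sub _ fun g hg => ?_) (sub _ fun h hh => ?_)
      · obtain ⟨h, hh, hgh⟩ := ropts_rel hGH g hg
        exact ⟨h, hh, congrArg Prod.fst (ih g (List.mem_append_right _ hg) hgh)⟩
      · obtain ⟨g, hg, hhg⟩ := ropts_rel (symm hGH) h hh
        exact ⟨g, hg, congrArg Prod.fst (ih g (List.mem_append_right _ hg) (symm hhg)).symm⟩

theorem exists_mem_opts_add_add_swap {f : WT → List WT}
    (hf : ∀ G H : WT, f (G.add H) = (f G).map (·.add H) ++ (f H).map G.add) {A B C D g : WT}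
    (hg : g ∈ f ((A.add B).add (C.add D))) :
    ∃ h ∈ f ((C.add B).add (A.add D)), ∃ A' B' C' D' : WT,
      g = (A'.add B').add (C'.add D') ∧ h = (C'.add B').add (A'.add D') := by
  simp only [hf, List.map_append, List.map_map, List.mem_append, List.mem_map,
    Function.comp_apply] at hg ⊢
  rcases hg with (⟨a, ha, rfl⟩ | ⟨b, hb, rfl⟩) | (⟨c, hc, rfl⟩ | ⟨d, hd, rfl⟩)
  · exact ⟨_, .inr (.inl ⟨a, ha, rfl⟩), a, B, C, D, rfl, rfl⟩
  · exact ⟨_, .inl (.inr ⟨b, hb, rfl⟩), A, b, C, D, rfl, rfl⟩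
  · exact ⟨_, .inl (.inl ⟨c, hc, rfl⟩), A, B, c, D, rfl, rfl⟩
  · exact ⟨_, .inr (.inr ⟨d, hd, rfl⟩), A, B, C, d, rfl, rfl⟩

theorem out_add_add_swap (A B C D : WT) :
    ((A.add B).add (C.add D)).out = ((C.add B).add (A.add D)).out := by
  refine out_eq_of_bisimulation (r := fun P Q => ∃ A B C D : WT,
      P = (A.add B).add (C.add D) ∧ Q = (C.add B).add (A.add D))
    ?_ ?_ ?_ ?_ ⟨A, B, C, D, rfl, rfl⟩
  · rintro _ _ ⟨A, B, C, D, rfl, rfl⟩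
    exact ⟨C, B, A, D, rfl, rfl⟩
  · rintro _ _ ⟨A, B, C, D, rfl, rfl⟩ n h
    obtain ⟨_, _, hAB, hCD, rfl⟩ := add_eq_int_iff.1 h
    obtain ⟨a, b, rfl, rfl, rfl⟩ := add_eq_int_iff.1 hAB
    obtain ⟨c, d, rfl, rfl, rfl⟩ := add_eq_int_iff.1 hCD
    simp only [add_int_int, int.injEq]
    ring
  · rintro _ _ ⟨A, B, C, D, rfl, rfl⟩ g hg
    exact exists_mem_opts_add_add_swap lopts_add hg
  · rintro _ _ ⟨A, B, C, D, rfl, rfl⟩ g hg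
    exact exists_mem_opts_add_add_swap ropts_add hg

theorem out_add_comm (G H : WT) : (G.add H).out = (H.add G).out := by
  simpa only [WT.add_zero] using out_add_add_swap G (int 0) H (int 0)

/-! ### Well-tempered games -/

theorem IsWT.of_mem_lopts {G g : WT} {p : Bool} (h : IsWT G p) (hg : g ∈ G.lopts) :
    IsWT g (!p) := by
  cases h with
  | int n => simp [lopts] at hg
  | node _ _ hLp _ => simpa using hLp g hg

theorem IsWT.of_mem_ropts {G g : WT} {p : Bool} (h : IsWT G p) (hg : g ∈ G.ropts) :
    IsWT g (!p) := by
  cases h with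
  | int n => simp [ropts] at hg
  | node _ _ _ hRp => simpa using hRp g hg

theorem IsWT.unique {G : WT} {p q : Bool} (hp : IsWT G p) (hq : IsWT G q) : p = q := by
  induction hp generalizing q with
  | int n => cases hq; rfl
  | node hL _ _ _ ih _ =>
    cases hq with
    | node _ _ hLq _ =>
      obtain ⟨g, hg⟩ := List.exists_mem_of_ne_nil _ hL
      rw [ih g hg (hLq g hg)]

theorem IsWT.lopts_ne_nil_of_odd {G : WT} (h : IsWT G true) : G.lopts ≠ [] := by
  generalize hb : true = b at h
  cases h with
  | int n => cases hb
  | node hL _ _ _ => exact hL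

theorem IsWT.neg {G : WT} {p : Bool} (h : IsWT G p) : IsWT G.neg p := by
  induction h with
  | int n => rw [neg_int]; exact .int _
  | node hL hR _ _ ihL ihR =>
    rw [neg_node]
    exact .node (by simpa using hR) (by simpa using hL) (by simpa using ihR) (by simpa using ihL)

theorem IsWT.add {G H : WT} {p q : Bool} (hG : IsWT G p) (hH : IsWT H q) :
    IsWT (G.add H) (xor p q) := by
  induction G, H using opts_induction₂ generalizing p q with
  | ind G H ihG ihH =>
  cases hG with
  | int m =>
    cases hH with
    | int n => rw [add_int_int]; exact .int _
    | @node L R q hL hR hLp hRp =>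
      rw [int_add_node, Bool.xor_not]
      refine .node (by simpa using hL) (by simpa using hR) ?_ ?_ <;>
        simp only [List.forall_mem_map]
      · exact fun h hh => ihH h (by simp [lopts, hh]) (.int m) (hLp h hh)
      · exact fun h hh => ihH h (by simp [ropts, hh]) (.int m) (hRp h hh)
  | @node L R p hL hR hLp hRp =>
    rw [node_add, Bool.not_xor]
    refine .node (by simp [hL]) (by simp [hR]) ?_ ?_ <;>
      simp only [List.forall_mem_append, List.forall_mem_map]
    · exact ⟨fun g hg => ihG g (by simp [lopts, hg]) (hLp g hg) hH,
        fun h hh => by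
          simpa using ihH h (by simp [hh]) (.node hL hR hLp hRp) (hH.of_mem_lopts hh)⟩
    · exact ⟨fun g hg => ihG g (by simp [ropts, hg]) (hRp g hg) hH,
        fun h hh => by
          simpa using ihH h (by simp [hh]) (.node hL hR hLp hRp) (hH.of_mem_ropts hh)⟩

theorem Wt.neg {G : WT} (h : G.Wt) : G.neg.Wt := h.imp fun _ => IsWT.neg

theorem Wt.add {G H : WT} (hG : G.Wt) (hH : H.Wt) : (G.add H).Wt :=
  let ⟨_, hp⟩ := hG; let ⟨_, hq⟩ := hH; ⟨_, hp.add hq⟩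

theorem out_add_int {G : WT} (hG : G.Wt) (c : ℤ) :
    (G.add (int c)).out = (G.Lout + c, G.Rout + c) := by
  induction G using opts_induction with
  | ind G ih =>
  obtain ⟨p, hp⟩ := hG
  cases hp with
  | int n => simp [add_int_int, out_int, Lout_int, Rout_int]
  | @node L R p hL hR hLp hRp =>
    have hLc : (L.map (·.add (int c))).map Rout = (L.map Rout).map (· + c) := by
      simp only [List.map_map]
      exact List.map_congr_left fun g hg => by
        simp [Rout, ih g (by simp [lopts, hg]) ⟨_, hLp g hg⟩]
    have hRc : (R.map (·.add (int c))).map Lout = (R.map Lout).map (· + c) := by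
      simp only [List.map_map]
      exact List.map_congr_left fun g hg => by
        simp [Lout, ih g (by simp [ropts, hg]) ⟨_, hRp g hg⟩]
    simp only [node_add, lopts, ropts, List.map_nil, List.append_nil, out_node, hLc, hRc,
      lmax_map_add_const (l := L.map Rout) (by simpa using hL),
      lmin_map_add_const (l := R.map Lout) (by simpa using hR), Lout_node, Rout_node]

theorem Lout_add_int {G : WT} (hG : G.Wt) (c : ℤ) : (G.add (int c)).Lout = G.Lout + c := by
  simp [Lout, out_add_int hG]

theorem Rout_add_int {G : WT} (hG : G.Wt) (c : ℤ) : (G.add (int c)).Rout = G.Rout + c := by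
  simp [Rout, out_add_int hG]

/-! ### Subgames and the gap -/

theorem Subgame.trans {A B C : WT} (hAB : Subgame A B) (hBC : Subgame B C) : Subgame A C := by
  induction hBC with
  | refl => exact hAB
  | left hmem _ ih => exact .left hmem ih
  | right hmem _ ih => exact .right hmem ih

theorem subgame_of_mem_lopts {G g : WT} (hg : g ∈ G.lopts) : Subgame g G := by
  cases G with
  | int n => simp [lopts] at hg
  | node L R => exact .left hg (.refl g)

theorem subgame_of_mem_ropts {G g : WT} (hg : g ∈ G.ropts) : Subgame g G := by
  cases G with
  | int n => simp [ropts] at hg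
  | node L R => exact .right hg (.refl g)

theorem Subgame.neg {K G : WT} (h : Subgame K G) : Subgame K.neg G.neg := by
  induction h with
  | refl => exact .refl _
  | left hmem _ ih => rw [neg_node]; exact .right (List.mem_map_of_mem hmem) ih
  | right hmem _ ih => rw [neg_node]; exact .left (List.mem_map_of_mem hmem) ih

theorem Wt.of_subgame {K G : WT} (h : Subgame K G) (hG : G.Wt) : K.Wt := by
  induction h with
  | refl => exact hG
  | left hmem _ ih => obtain ⟨p, hp⟩ := hG; exact ih ⟨_, hp.of_mem_lopts hmem⟩
  | right hmem _ ih => obtain ⟨p, hp⟩ := hG; exact ih ⟨_, hp.of_mem_ropts hmem⟩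

theorem exists_of_subgame_add {K A B : WT} (h : Subgame K (A.add B)) :
    ∃ A' B', Subgame A' A ∧ Subgame B' B ∧ K = A'.add B' := by
  generalize hW : A.add B = W at h
  induction h generalizing A B with
  | refl => exact ⟨A, B, .refl A, .refl B, hW.symm⟩
  | @left g L R hmem _ ih =>
    have hg : g ∈ A.lopts.map (·.add B) ++ B.lopts.map A.add := by
      rw [← lopts_add, hW]; exact hmem
    rcases List.mem_append.1 hg with hg | hg <;> obtain ⟨g', hg', rfl⟩ := List.mem_map.1 hg
    · obtain ⟨A', B', hA, hB, rfl⟩ := ih rfl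
      exact ⟨A', B', hA.trans (subgame_of_mem_lopts hg'), hB, rfl⟩
    · obtain ⟨A', B', hA, hB, rfl⟩ := ih rfl
      exact ⟨A', B', hA, hB.trans (subgame_of_mem_lopts hg'), rfl⟩
  | @right g L R hmem _ ih =>
    have hg : g ∈ A.ropts.map (·.add B) ++ B.ropts.map A.add := by
      rw [← ropts_add, hW]; exact hmem
    rcases List.mem_append.1 hg with hg | hg <;> obtain ⟨g', hg', rfl⟩ := List.mem_map.1 hg
    · obtain ⟨A', B', hA, hB, rfl⟩ := ih rfl
      exact ⟨A', B', hA.trans (subgame_of_mem_ropts hg'), hB, rfl⟩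
    · obtain ⟨A', B', hA, hB, rfl⟩ := ih rfl
      exact ⟨A', B', hA, hB.trans (subgame_of_mem_ropts hg'), rfl⟩

/-- `G.gap false ≤ 0`, stated without the supremum. -/
def GapNonpos (G : WT) : Prop := ∀ K, Subgame K G → IsWT K false → K.Rout ≤ K.Lout

theorem GapNonpos.of_subgame {K G : WT} (hG : GapNonpos G) (h : Subgame K G) : GapNonpos K :=
  fun K' hK' => hG K' (hK'.trans h)

theorem GapNonpos.neg {G : WT} (hG : GapNonpos G) : GapNonpos G.neg := fun K hK hKe => by
  have := hG K.neg (by simpa only [WT.neg_neg] using hK.neg) hKe.neg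
  rw [Lout_neg, Rout_neg] at this
  omega

theorem sub_le_of_gap_eq {G K : WT} {c : ℤ} (hG : G.gap false = c) (hK : Subgame K G)
    (hKe : IsWT K false) : K.Rout - K.Lout ≤ c := by
  -- an unbounded set has supremum `⊥` in `WithBot ℤ`, so a finite gap forces boundedness
  have hbdd : BddAbove {x : WithBot ℤ | ∃ H, Subgame H G ∧ IsWT H false ∧
      x = ((H.Rout - H.Lout : ℤ) : WithBot ℤ)} := by
    by_contra h
    rw [gap, csSup_of_not_bddAbove h, csSup_empty] at hG
    exact WithBot.bot_ne_coe hG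
  exact WithBot.coe_le_coe.1 (hG ▸ le_csSup hbdd ⟨K, hK, hKe, rfl⟩)

theorem GapNonpos.of_gap_eq_zero {G : WT} (hG : G.gap false = ((0 : ℤ) : WithBot ℤ)) :
    GapNonpos G := fun K hK hKe => by
  have := sub_le_of_gap_eq hG hK hKe
  omega

/-! ### Translation bounds -/

theorem le_out_add_of_gapNonpos {K X : WT} (hK : GapNonpos K) (hX : X.Wt) :
    (IsWT K false → K.Rout + X.Lout ≤ (K.add X).Lout ∧ K.Rout + X.Rout ≤ (K.add X).Rout) ∧
    (IsWT K true → K.Lout + X.Rout ≤ (K.add X).Lout) := by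
  induction K, X using opts_induction₂ with
  | ind K X ihK ihX =>
  refine ⟨fun hKe => ?_, fun hKo => ?_⟩
  · cases X with
    | int n =>
      rw [Lout_add_int ⟨_, hKe⟩, Rout_add_int ⟨_, hKe⟩, Lout_int, Rout_int]
      have := hK K (.refl K) hKe
      omega
    | node L R =>
      have ⟨q, hq⟩ := hX
      cases hq with
      | node hL hR hLp hRp =>
      constructor
      · obtain ⟨x, hx, hXx⟩ := (le_Lout_iff (W := node L R) hL).1 le_rfl
        have h₁ := ((ihX x (List.mem_append_left _ hx) hK ⟨_, hLp x hx⟩).1 hKe).2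
        have h₂ := Rout_le_Lout_of_mem_lopts (W := K.add (node L R)) (g := K.add x)
          (by rw [lopts_add]; exact List.mem_append_right _ (List.mem_map_of_mem hx))
        omega
      · have hne : (K.add (node L R)).ropts ≠ [] := by
          rw [ropts_add]
          exact List.append_ne_nil_of_right_ne_nil _ (by simpa [ropts] using hR)
        refine (le_Rout_iff hne).2 fun g hg => ?_
        simp only [ropts_add, List.mem_append, List.mem_map] at hg
        rcases hg with ⟨k, hk, rfl⟩ | ⟨x, hx, rfl⟩
        · have hk' := hK.of_subgame (subgame_of_mem_ropts hk)
          have h₁ := (ihK k (List.mem_append_right _ hk) hk' hX).2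
            (by simpa using hKe.of_mem_ropts hk)
          have h₂ := Rout_le_Lout_of_mem_ropts hk
          omega
        · have h₁ := ((ihX x (List.mem_append_right _ hx) hK ⟨_, hRp x hx⟩).1 hKe).1
          have h₂ := Rout_le_Lout_of_mem_ropts (W := node L R) hx
          omega
  · obtain ⟨k, hk, hKk⟩ := (le_Lout_iff hKo.lopts_ne_nil_of_odd).1 le_rfl
    have h₁ := ((ihK k (List.mem_append_left _ hk) (hK.of_subgame (subgame_of_mem_lopts hk)) hX).1
      (by simpa using hKo.of_mem_lopts hk)).2
    have h₂ := Rout_le_Lout_of_mem_lopts (W := K.add X) (g := k.add X)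
      (by rw [lopts_add]; exact List.mem_append_left _ (List.mem_map_of_mem hk))
    omega

section TranslationBounds

variable {K X : WT}

theorem le_Lout_add_of_even (hKe : IsWT K false) (hK : GapNonpos K) (hX : X.Wt) :
    K.Rout + X.Lout ≤ (K.add X).Lout :=
  ((le_out_add_of_gapNonpos hK hX).1 hKe).1

theorem le_Rout_add_of_even (hKe : IsWT K false) (hK : GapNonpos K) (hX : X.Wt) :
    K.Rout + X.Rout ≤ (K.add X).Rout :=
  ((le_out_add_of_gapNonpos hK hX).1 hKe).2

theorem le_Lout_add_of_odd (hKo : IsWT K true) (hK : GapNonpos K) (hX : X.Wt) :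
    K.Lout + X.Rout ≤ (K.add X).Lout :=
  (le_out_add_of_gapNonpos hK hX).2 hKo

theorem Lout_add_le_of_even (hKe : IsWT K false) (hK : GapNonpos K) (hX : X.Wt) :
    (K.add X).Lout ≤ K.Lout + X.Lout := by
  have := le_Rout_add_of_even hKe.neg hK.neg hX.neg
  rw [← WT.neg_add, Rout_neg, Rout_neg, Rout_neg] at this
  omega

theorem Rout_add_le_of_even (hKe : IsWT K false) (hK : GapNonpos K) (hX : X.Wt) :
    (K.add X).Rout ≤ K.Lout + X.Rout := by
  have := le_Lout_add_of_even hKe.neg hK.neg hX.neg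
  rw [← WT.neg_add, Rout_neg, Lout_neg, Lout_neg] at this
  omega

theorem Rout_add_le_of_odd (hKo : IsWT K true) (hK : GapNonpos K) (hX : X.Wt) :
    (K.add X).Rout ≤ K.Rout + X.Lout := by
  have := le_Lout_add_of_odd hKo.neg hK.neg hX.neg
  rw [← WT.neg_add, Lout_neg, Lout_neg, Rout_neg] at this
  omega

end TranslationBounds

theorem GapNonpos.add {A B : WT} (hA : A.Wt) (hB : B.Wt) (hA' : GapNonpos A)
    (hB' : GapNonpos B) : GapNonpos (A.add B) := by
  intro K hK hKe
  obtain ⟨A, B, hAs, hBs, rfl⟩ := exists_of_subgame_add hK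
  obtain ⟨p, hp⟩ := hA.of_subgame hAs
  obtain ⟨q, hq⟩ := hB.of_subgame hBs
  have hA' := hA'.of_subgame hAs
  have hB' := hB'.of_subgame hBs
  have hcomm : (B.add A).Lout = (A.add B).Lout := by rw [Lout, Lout, out_add_comm]
  have hpq : p = q := by simpa using (hp.add hq).unique hKe
  subst hpq
  cases p with
  | false =>
    have h₁ := Rout_add_le_of_even hp hA' ⟨_, hq⟩
    have h₂ := le_Lout_add_of_even hq hB' ⟨_, hp⟩
    omega
  | true =>
    have h₁ := Rout_add_le_of_odd hp hA' ⟨_, hq⟩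
    have h₂ := le_Lout_add_of_odd hq hB' ⟨_, hp⟩
    omega

/-! ### Invertibility and comparison -/

theorem zero_le_Rout_add_neg_self {G : WT} (hG : G.Wt) : 0 ≤ (G.add G.neg).Rout := by
  induction G using opts_induction with
  | ind G ih =>
  obtain ⟨p, hp⟩ := hG
  cases hp with
  | int n => simp [neg_int, add_int_int, Rout_int]
  | @node L R p hL hR hLp hRp =>
    have hne : ((node L R).add (node L R).neg).ropts ≠ [] := by
      rw [ropts_add]
      exact List.append_ne_nil_of_left_ne_nil (by simpa [ropts] using hR) _
    refine (le_Rout_iff hne).2 fun g hg => ?_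
    simp only [ropts_add, ropts_neg, List.map_map, List.mem_append, List.mem_map,
      Function.comp_apply] at hg
    -- mirror Right's move in the other component
    rcases hg with ⟨r, hr, rfl⟩ | ⟨l, hl, rfl⟩
    · have h₁ := Rout_le_Lout_of_mem_lopts (W := r.add (node L R).neg) (g := r.add r.neg)
        (by rw [lopts_add, lopts_neg]
            exact List.mem_append_right _ (List.mem_map_of_mem (List.mem_map_of_mem hr)))
      have h₂ := ih r (List.mem_append_right _ hr) ⟨_, hRp r hr⟩
      omega
    · have h₁ := Rout_le_Lout_of_mem_lopts (W := (node L R).add l.neg) (g := l.add l.neg)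
        (by rw [lopts_add]; exact List.mem_append_left _ (List.mem_map_of_mem hl))
      have h₂ := ih l (List.mem_append_left _ hl) ⟨_, hLp l hl⟩
      omega

theorem Lout_add_neg_self_nonpos {G : WT} (hG : G.Wt) : (G.add G.neg).Lout ≤ 0 := by
  have := zero_le_Rout_add_neg_self hG.neg
  rw [← WT.neg_add, Rout_neg] at this
  omega

theorem out_add_neg_self_add {G X : WT} (hG : G.Wt) (hG' : GapNonpos G) (hX : X.Wt) :
    ((G.add G.neg).add X).out = X.out := by
  have ⟨p, hp⟩ := hG
  have hKe : IsWT (G.add G.neg) false := by simpa using hp.add hp.neg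
  have hK' := hG'.add hG hG.neg hG'.neg
  have hR := zero_le_Rout_add_neg_self hG
  have hL := Lout_add_neg_self_nonpos hG
  have hLout : ((G.add G.neg).add X).Lout = X.Lout := by
    linarith [le_Lout_add_of_even hKe hK' hX, Lout_add_le_of_even hKe hK' hX]
  have hRout : ((G.add G.neg).add X).Rout = X.Rout := by
    linarith [le_Rout_add_of_even hKe hK' hX, Rout_add_le_of_even hKe hK' hX]
  exact Prod.ext hLout hRout

theorem out_int_zero_add {X : WT} (hX : X.Wt) : ((int 0).add X).out = X.out := by
  rw [out_add_comm, out_add_int hX]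
  simp [Lout, Rout]

theorem equiv_add_neg_self {G : WT} (hG : G.Wt) (hG' : GapNonpos G) :
    Equiv (G.add G.neg) (int 0) := fun X hX => by
  simp only [Lout, Rout, out_add_neg_self_add hG hG' hX, out_int_zero_add hX, and_self]

theorem ge_of_zero_le_Rout_add_neg {G H : WT} (hG : G.Wt) (hH : H.Wt) (hG' : GapNonpos G)
    (hH' : GapNonpos H) (hGH : SamePar G H) (h : 0 ≤ (G.add H.neg).Rout) : Ge G H := by
  intro X hX
  obtain ⟨p, hp, hq⟩ := hGH
  have hKe : IsWT (G.add H.neg) false := by simpa using hp.add hq.neg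
  have hK' := hG'.add hG hH.neg hH'.neg
  -- `(G - H) + (H + X)` has the outcomes of `(H - H) + (G + X)`, hence of `G + X`
  have e : ((G.add H.neg).add (H.add X)).out = (G.add X).out := by
    rw [out_add_add_swap, out_add_neg_self_add hH hH' (hG.add hX)]
  have h₁ := le_Lout_add_of_even hKe hK' (hH.add hX)
  have h₂ := le_Rout_add_of_even hKe hK' (hH.add hX)
  simp only [Lout, Rout, e] at h₁ h₂ h ⊢
  omega

theorem zero_le_Rout_add_neg_of_ge {G H : WT} (hH : H.Wt) (h : Ge G H) :
    0 ≤ (G.add H.neg).Rout :=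
  (zero_le_Rout_add_neg_self hH).trans (h H.neg hH.neg).2

theorem samePar_of_ge {G H : WT} (hG : G.Wt) (hH : H.Wt) (hG' : GapNonpos G)
    (hH' : GapNonpos H) (h : Ge G H) : SamePar G H := by
  obtain ⟨p, hp⟩ := hG
  obtain ⟨q, hq⟩ := hH
  suffices p = q from ⟨p, hp, this ▸ hq⟩
  -- the switch `{-n | n}` separates games of different parities
  have hX (n : ℤ) : (node [int (-n)] [int n]).Wt :=
    ⟨true, .node (p := false) (by simp) (by simp) (by simp [IsWT.int]) (by simp [IsWT.int])⟩
  have hXL (n : ℤ) : (node [int (-n)] [int n]).Lout = -n := by simp [Lout_node, Rout_int, lmax]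
  have hXR (n : ℤ) : (node [int (-n)] [int n]).Rout = n := by simp [Rout_node, Lout_int, lmin]
  cases p <;> cases q
  · rfl
  · obtain ⟨n, hn⟩ : ∃ n : ℤ, G.Lout - H.Lout < 2 * n :=
      ⟨max (G.Lout - H.Lout) 0 + 1, by omega⟩
    have h₁ := Lout_add_le_of_even hp hG' (hX n)
    have h₂ := le_Lout_add_of_odd hq hH' (hX n)
    have h₃ := (h _ (hX n)).1
    rw [hXL] at h₁
    rw [hXR] at h₂
    omega
  · obtain ⟨n, hn⟩ : ∃ n : ℤ, G.Rout - H.Rout < 2 * n :=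
      ⟨max (G.Rout - H.Rout) 0 + 1, by omega⟩
    have h₁ := Rout_add_le_of_odd hp hG' (hX n)
    have h₂ := le_Rout_add_of_even hq hH' (hX n)
    have h₃ := (h _ (hX n)).2
    rw [hXL] at h₁
    rw [hXR] at h₂
    omega
  · rfl

theorem ge_iff_zero_le_Rout_add_neg {G H : WT} (hG : G.Wt) (hH : H.Wt) (hG' : GapNonpos G)
    (hH' : GapNonpos H) : Ge G H ↔ 0 ≤ (G.add H.neg).Rout ∧ SamePar G H :=
  ⟨fun h => ⟨zero_le_Rout_add_neg_of_ge hH h, samePar_of_ge hG hH hG' hH' h⟩,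
    fun ⟨h, hGH⟩ => ge_of_zero_le_Rout_add_neg hG hH hG' hH' hGH h⟩

theorem Rout_add_neg_eq_neg_Lout (G H : WT) : (G.add H.neg).Rout = -(H.add G.neg).Lout := by
  have := Lout_neg (G.add H.neg)
  rw [WT.neg_add, WT.neg_neg, Lout, out_add_comm, ← Lout] at this
  omega

end WT

/-- for G, H ∈ I (gap₀ = 0): G - G ≈ 0, and
G ≳ H ↔ (R(G - H) ≥ 0 and π(G) = π(H)) ↔ (L(H - G) ≤ 0 and π(G) = π(H)). -/
theorem invertible_comparison (G H : WT) (hG : G.Wt) (hH : H.Wt)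
    (hGg : G.gap false = ((0 : ℤ) : WithBot ℤ)) (hHg : H.gap false = ((0 : ℤ) : WithBot ℤ)) :
    WT.Equiv (G.add G.neg) (WT.int 0) ∧
    (WT.Ge G H ↔ (0 ≤ (G.add H.neg).Rout ∧ WT.SamePar G H)) ∧
    (WT.Ge G H ↔ ((H.add G.neg).Lout ≤ 0 ∧ WT.SamePar G H)) := by
  have hG' := WT.GapNonpos.of_gap_eq_zero hGg
  have hH' := WT.GapNonpos.of_gap_eq_zero hHg
  have hcmp := WT.ge_iff_zero_le_Rout_add_neg hG hH hG' hH'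
  refine ⟨WT.equiv_add_neg_self hG hG', hcmp, ?_⟩
  rw [hcmp, WT.Rout_add_neg_eq_neg_Lout, neg_nonneg]
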